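/- Unnesting of nested loops: for all lists A, B, C over L and all loop labels s, t : β, the cyclic words [s⁺] ++ A ++ [t⁺] ++ B ++ [t⁻] ++ C ++ [s⁻] and [s⁺] ++ A ++ C ++ [s⁻] ++ [t⁺] ++ B ++ [t⁻] are mutation-equivalent, i.e. R ([s⁺] ++ A ++ [t⁺] ++ B ++ [t⁻] ++ C ++ [s⁻]) ([s⁺] ++ A ++ C ++ [s⁻] ++ [t⁺] ++ B ++ [t⁻]). -/

import Mathlib

/-- One-step moves on cyclic words over the letter type `α ⊕ β × Bool`
(`α` = outer letters, `β` = loop labels, `Sum.inr (t, true)` = `t⁺`,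
`Sum.inr (t, false)` = `t⁻`): rotation and the basic mutation. -/
def MutStep (α β : Type*) : List (α ⊕ β × Bool) → List (α ⊕ β × Bool) → Prop :=
  fun w₁ w₂ =>
    (∃ (x : α ⊕ β × Bool) (w : List (α ⊕ β × Bool)), w₁ = x :: w ∧ w₂ = w ++ [x]) ∨
    (∃ (t : β) (A B C D : List (α ⊕ β × Bool)),
      w₁ = A ++ [Sum.inr (t, true)] ++ B ++ C ++ [Sum.inr (t, false)] ++ D ∧
      w₂ = D ++ [Sum.inr (t, true)] ++ C ++ B ++ [Sum.inr (t, false)] ++ A)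

/-- Mutation equivalence of cyclic words: the smallest equivalence relation
(reflexive–symmetric–transitive closure) containing the one-step moves. -/
def MutEquiv (α β : Type*) : List (α ⊕ β × Bool) → List (α ⊕ β × Bool) → Prop :=
  Relation.EqvGen (MutStep α β)

/-! Unnesting is one basic mutation followed by a rotation: the basic mutation with blocks
`s⁺A`, `B`, `[]`, `Cs⁻` takes `(s⁺A) t⁺ B t⁻ (Cs⁻)` to `(Cs⁻) t⁺ B t⁻ (s⁺A)`, which is a
rotation of `s⁺ A C s⁻ t⁺ B t⁻`. -/

namespace MutEquiv

variable {α β : Type*}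

theorem refl (u : List (α ⊕ β × Bool)) : MutEquiv α β u u :=
  Relation.EqvGen.refl u

theorem trans {u v w : List (α ⊕ β × Bool)} (huv : MutEquiv α β u v) (hvw : MutEquiv α β v w) :
    MutEquiv α β u w :=
  Relation.EqvGen.trans u v w huv hvw

theorem rotate (u v : List (α ⊕ β × Bool)) : MutEquiv α β (u ++ v) (v ++ u) := by
  induction u generalizing v with
  | nil => simpa using refl v
  | cons x u ih =>
    have hstep : MutEquiv α β (x :: (u ++ v)) (u ++ (v ++ [x])) :=
      Relation.EqvGen.rel _ _ (Or.inl ⟨x, u ++ v, rfl, by simp⟩)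
    simpa using hstep.trans (ih (v ++ [x]))

theorem mutate (t : β) (A B C D : List (α ⊕ β × Bool)) :
    MutEquiv α β (A ++ [Sum.inr (t, true)] ++ B ++ C ++ [Sum.inr (t, false)] ++ D)
      (D ++ [Sum.inr (t, true)] ++ C ++ B ++ [Sum.inr (t, false)] ++ A) :=
  Relation.EqvGen.rel _ _ (Or.inr ⟨t, A, B, C, D, rfl, rfl⟩)

end MutEquiv

/-- Unnesting of nested loops:
`(s⁺ A t⁺ B t⁻ C s⁻)` is mutation-equivalent to `(s⁺ A C s⁻ t⁺ B t⁻)`. -/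
theorem mut_unnest {α β : Type*} (A B C : List (α ⊕ β × Bool)) (s t : β) :
    MutEquiv α β
      ([Sum.inr (s, true)] ++ A ++ [Sum.inr (t, true)] ++ B ++ [Sum.inr (t, false)] ++ C
        ++ [Sum.inr (s, false)])
      ([Sum.inr (s, true)] ++ A ++ C ++ [Sum.inr (s, false)] ++ [Sum.inr (t, true)] ++ B
        ++ [Sum.inr (t, false)]) := by
  have hmutate := MutEquiv.mutate t (Sum.inr (s, true) :: A) B [] (C ++ [Sum.inr (s, false)])
  have hrotate := MutEquiv.rotate
    (C ++ [Sum.inr (s, false), Sum.inr (t, true)] ++ B ++ [Sum.inr (t, false)])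
    (Sum.inr (s, true) :: A)
  simp only [List.append_assoc, List.cons_append, List.nil_append] at hmutate hrotate ⊢
  exact hmutate.trans hrotate
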